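/- arXiv:1706.09178 — 2 statements merged into one kernel-verified Lean document; each statement's English description precedes it below -/
import Mathlib

section
/- For the increasing sequence (β_j) of indecomposables, the index j_0 in the decomposition x = e β_{j_0} + f β_{j_0+1} (e ≥ 1, f ≥ 0) is characterized by the inequalities β_{j_0}/β_{j_0}' ≤ x/x' < β_{j_0+1}/β_{j_0+1}'. -/
open Real Filter

noncomputable def omg (D : ℕ) : ℝ := if D % 4 = 1 then (1 + Real.sqrt D) / 2 else Real.sqrt D

noncomputable def omgc (D : ℕ) : ℝ := if D % 4 = 1 then (1 - Real.sqrt D) / 2 else -Real.sqrt D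

noncomputable def sigmaD (D : ℕ) : ℝ := omg D + (⌊-omgc D⌋ : ℤ)

noncomputable def gam (D : ℕ) : ℕ → ℝ
  | 0 => sigmaD D
  | n + 1 => 1 / (gam D n - ⌊gam D n⌋)

/-- partial quotients of the continued fraction of σ_D -/
noncomputable def uD (D : ℕ) (n : ℕ) : ℤ := ⌊gam D n⌋

noncomputable def emb1 (D : ℕ) (x : ℤ × ℤ) : ℝ := (x.1 : ℝ) + (x.2 : ℝ) * omg D

noncomputable def emb2 (D : ℕ) (x : ℤ × ℤ) : ℝ := (x.1 : ℝ) + (x.2 : ℝ) * omgc D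

def conjp (D : ℕ) (x : ℤ × ℤ) : ℤ × ℤ := if D % 4 = 1 then (x.1 + x.2, -x.2) else (x.1, -x.2)

def TotPos (D : ℕ) (x : ℤ × ℤ) : Prop := 0 < emb1 D x ∧ 0 < emb2 D x

def Indec (D : ℕ) (x : ℤ × ℤ) : Prop :=
  TotPos D x ∧ ¬ ∃ y z : ℤ × ℤ, TotPos D y ∧ TotPos D z ∧ x = y + z

noncomputable def Nm (D : ℕ) (x : ℤ × ℤ) : ℝ := emb1 D x * emb2 D x

noncomputable def disc (D : ℕ) : ℝ := if D % 4 = 1 then (D : ℝ) else 4 * (D : ℝ)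

def UniqDec (D : ℕ) (x : ℤ × ℤ) : Prop :=
  ∃! m : Multiset (ℤ × ℤ), (∀ y ∈ m, Indec D y) ∧ m.sum = x

/-!
View `y` through its two embeddings `(y, y')`. For consecutive indecomposables `β j`, `β (j + 1)`
the slope condition on `x / x'` says exactly that `x = s β_j + t β_{j+1}` with real `s > 0`,
`t ≥ 0`. The coefficients are integers: otherwise reducing them modulo `1` gives a lattice point
`p`, and `p` or `β_j + β_{j+1} - p` is a totally positive `w` with `w < β_{j+1}` and
`w' < β_j'`. Such a `w` lies above an indecomposable `β_k`, and then `k ≤ j` because `β` increases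
while `k > j` because the conjugates `β'` decrease.
-/

lemma Nat.not_isSquare_of_squarefree {D : ℕ} (hD : 2 ≤ D) (hsq : Squarefree D) :
    ¬ IsSquare D := by
  rintro ⟨k, rfl⟩
  obtain rfl : k = 1 := Nat.isUnit_iff.mp (hsq k dvd_rfl)
  norm_num at hD

lemma irrational_omg {D : ℕ} (hD : 2 ≤ D) (hsq : Squarefree D) : Irrational (omg D) := by
  have hs : Irrational √D :=
    irrational_sqrt_natCast_iff.mpr (Nat.not_isSquare_of_squarefree hD hsq)
  unfold omg
  split_ifs
  · simpa using (hs.intCast_add 1).div_natCast two_ne_zero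
  · exact hs

lemma irrational_omgc {D : ℕ} (hD : 2 ≤ D) (hsq : Squarefree D) : Irrational (omgc D) := by
  have hs : Irrational √D :=
    irrational_sqrt_natCast_iff.mpr (Nat.not_isSquare_of_squarefree hD hsq)
  unfold omgc
  split_ifs
  · simpa using (hs.intCast_sub 1).div_natCast two_ne_zero
  · exact hs.neg

def intPairEval (ω : ℝ) : ℤ × ℤ →+ ℝ where
  toFun x := x.1 + x.2 * ω
  map_zero' := by simp
  map_add' x y := by simp only [Prod.fst_add, Prod.snd_add]; push_cast; ring

lemma intPairEval_injective {ω : ℝ} (hω : Irrational ω) : Function.Injective (intPairEval ω) := by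
  refine (injective_iff_map_eq_zero _).2 fun x hx => ?_
  change (x.1 : ℝ) + x.2 * ω = 0 at hx
  have h2 : x.2 = 0 := by
    by_contra h
    exact ((hω.intCast_mul h).intCast_add x.1).ne_zero hx
  have h1 : x.1 = 0 := by simpa [h2] using hx
  exact Prod.ext h1 h2

lemma emb1_add (D : ℕ) (y z : ℤ × ℤ) : emb1 D (y + z) = emb1 D y + emb1 D z :=
  map_add (intPairEval (omg D)) y z

lemma emb2_add (D : ℕ) (y z : ℤ × ℤ) : emb2 D (y + z) = emb2 D y + emb2 D z :=
  map_add (intPairEval (omgc D)) y z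

lemma emb1_sub (D : ℕ) (y z : ℤ × ℤ) : emb1 D (y - z) = emb1 D y - emb1 D z :=
  map_sub (intPairEval (omg D)) y z

lemma emb2_sub (D : ℕ) (y z : ℤ × ℤ) : emb2 D (y - z) = emb2 D y - emb2 D z :=
  map_sub (intPairEval (omgc D)) y z

lemma emb1_zsmul (D : ℕ) (n : ℤ) (y : ℤ × ℤ) : emb1 D (n • y) = n * emb1 D y := by
  rw [← zsmul_eq_mul]; exact map_zsmul (intPairEval (omg D)) n y

lemma emb2_zsmul (D : ℕ) (n : ℤ) (y : ℤ × ℤ) : emb2 D (n • y) = n * emb2 D y := by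
  rw [← zsmul_eq_mul]; exact map_zsmul (intPairEval (omgc D)) n y

def intTrace (D : ℕ) (y : ℤ × ℤ) : ℤ := if D % 4 = 1 then 2 * y.1 + y.2 else 2 * y.1

lemma intTrace_eq (D : ℕ) (y : ℤ × ℤ) : (intTrace D y : ℝ) = emb1 D y + emb2 D y := by
  unfold intTrace emb1 emb2 omg omgc
  split_ifs <;> push_cast <;> ring

lemma TotPos.intTrace_pos {D : ℕ} {y : ℤ × ℤ} (hy : TotPos D y) : 0 < intTrace D y := by
  have : (0 : ℝ) < intTrace D y := by rw [intTrace_eq]; exact add_pos hy.1 hy.2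
  exact_mod_cast this

lemma TotPos.exists_indec_le {D : ℕ} {w : ℤ × ℤ} (hw : TotPos D w) :
    ∃ z, Indec D z ∧ emb1 D z ≤ emb1 D w ∧ emb2 D z ≤ emb2 D w := by
  induction h : (intTrace D w).toNat using Nat.strong_induction_on generalizing w with
  | _ n ih =>
    by_cases hi : Indec D w
    · exact ⟨w, hi, le_rfl, le_rfl⟩
    obtain ⟨y, z, hy, hz, rfl⟩ : ∃ y z, TotPos D y ∧ TotPos D z ∧ w = y + z := by
      by_contra hcon
      exact hi ⟨hw, hcon⟩
    have hlt : intTrace D y < intTrace D (y + z) := by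
      have : (intTrace D y : ℝ) < intTrace D (y + z) := by
        rw [intTrace_eq, intTrace_eq, emb1_add, emb2_add]
        linarith [hz.1, hz.2]
      exact_mod_cast this
    obtain ⟨u, hu, hu1, hu2⟩ := ih _ (by have := hy.intTrace_pos; omega) hy rfl
    refine ⟨u, hu, ?_, ?_⟩
    · rw [emb1_add]; linarith [hz.1]
    · rw [emb2_add]; linarith [hz.2]

lemma Indec.emb2_lt_of_emb1_lt {D : ℕ} (hD : 2 ≤ D) (hsq : Squarefree D) {y z : ℤ × ℤ}
    (hy : TotPos D y) (hz : Indec D z) (h : emb1 D y < emb1 D z) : emb2 D z < emb2 D y := by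
  by_contra! hle
  have h1 : 0 < emb1 D (z - y) := by rw [emb1_sub]; linarith
  have hne : z - y ≠ 0 := fun h0 => h1.ne' (by rw [h0]; exact map_zero (intPairEval (omg D)))
  have h2 : 0 < emb2 D (z - y) := by
    refine lt_of_le_of_ne (by rw [emb2_sub]; linarith) fun h0 => hne ?_
    exact intPairEval_injective (irrational_omgc hD hsq) (h0.symm.trans (map_zero _).symm)
  exact hz.2 ⟨y, z - y, hy, ⟨h1, h2⟩, by abel⟩

lemma strictAnti_emb2_of_strictMono_emb1 {D : ℕ} (hD : 2 ≤ D) (hsq : Squarefree D)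
    {ι : Type*} [Preorder ι] {β : ι → ℤ × ℤ} (hβind : ∀ j, Indec D (β j))
    (hβmono : StrictMono fun j => emb1 D (β j)) : StrictAnti fun j => emb2 D (β j) :=
  fun _ _ hjk => (hβind _).emb2_lt_of_emb1_lt hD hsq (hβind _).1 (hβmono hjk)

lemma not_totPos_of_lt_of_lt {D : ℕ} {β : ℤ → ℤ × ℤ}
    (hβsurj : ∀ x : ℤ × ℤ, Indec D x → ∃ j : ℤ, β j = x)
    (hβmono : StrictMono fun j => emb1 D (β j)) (hβanti : StrictAnti fun j => emb2 D (β j))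
    (j : ℤ) {w : ℤ × ℤ} (h1 : emb1 D w < emb1 D (β (j + 1))) (h2 : emb2 D w < emb2 D (β j)) :
    ¬ TotPos D w := by
  intro hw
  obtain ⟨z, hz, hz1, hz2⟩ := hw.exists_indec_le
  obtain ⟨k, rfl⟩ := hβsurj z hz
  have hk1 : k < j + 1 := hβmono.lt_iff_lt.mp (hz1.trans_lt h1)
  have hk2 : j < k := hβanti.lt_iff_gt.mp (hz2.trans_lt h2)
  omega

lemma mul_add_mul_lt_of_lt {a b u v : ℝ} (hab : a < b) (hb : 0 < b) (hu : 0 ≤ u) (hv1 : v < 1)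
    (huv : u + v ≤ 1) : u * a + v * b < b := by
  rcases hu.eq_or_lt with rfl | hu
  · nlinarith
  · nlinarith [mul_lt_mul_of_pos_left hab hu]

lemma false_of_emb_eq_of_mem_triangle {D : ℕ} {β : ℤ → ℤ × ℤ} (hβind : ∀ j, Indec D (β j))
    (hβsurj : ∀ x : ℤ × ℤ, Indec D x → ∃ j : ℤ, β j = x)
    (hβmono : StrictMono fun j => emb1 D (β j)) (hβanti : StrictAnti fun j => emb2 D (β j))
    (j : ℤ) (w : ℤ × ℤ) {u v : ℝ} (hu : 0 ≤ u) (hv : 0 ≤ v) (hu1 : u < 1) (hv1 : v < 1)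
    (huv : 0 < u + v) (huv1 : u + v ≤ 1)
    (h1 : emb1 D w = u * emb1 D (β j) + v * emb1 D (β (j + 1)))
    (h2 : emb2 D w = u * emb2 D (β j) + v * emb2 D (β (j + 1))) : False := by
  obtain ⟨⟨hA1, hA2⟩, -⟩ := hβind j
  obtain ⟨⟨hB1, hB2⟩, -⟩ := hβind (j + 1)
  have hAB1 : emb1 D (β j) < emb1 D (β (j + 1)) := hβmono (lt_add_one j)
  have hBA2 : emb2 D (β (j + 1)) < emb2 D (β j) := hβanti (lt_add_one j)
  refine not_totPos_of_lt_of_lt hβsurj hβmono hβanti j (w := w) ?_ ?_ ⟨?_, ?_⟩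
  · rw [h1]; exact mul_add_mul_lt_of_lt hAB1 hB1 hu hv1 huv1
  · rw [h2, add_comm]; exact mul_add_mul_lt_of_lt hBA2 hA2 hv hu1 (by linarith)
  · rw [h1]; nlinarith [min_le_left (emb1 D (β j)) (emb1 D (β (j + 1))),
      min_le_right (emb1 D (β j)) (emb1 D (β (j + 1))), lt_min hA1 hB1]
  · rw [h2]; nlinarith [min_le_left (emb2 D (β j)) (emb2 D (β (j + 1))),
      min_le_right (emb2 D (β j)) (emb2 D (β (j + 1))), lt_min hA2 hB2]

lemma fract_eq_zero_of_emb_eq {D : ℕ} {β : ℤ → ℤ × ℤ} (hβind : ∀ j, Indec D (β j))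
    (hβsurj : ∀ x : ℤ × ℤ, Indec D x → ∃ j : ℤ, β j = x)
    (hβmono : StrictMono fun j => emb1 D (β j)) (hβanti : StrictAnti fun j => emb2 D (β j))
    (j : ℤ) {x : ℤ × ℤ} {s t : ℝ}
    (h1 : emb1 D x = s * emb1 D (β j) + t * emb1 D (β (j + 1)))
    (h2 : emb2 D x = s * emb2 D (β j) + t * emb2 D (β (j + 1))) :
    Int.fract s = 0 ∧ Int.fract t = 0 := by
  set u := Int.fract s
  set v := Int.fract t
  set p := x - ⌊s⌋ • β j - ⌊t⌋ • β (j + 1)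
  have hp1 : emb1 D p = u * emb1 D (β j) + v * emb1 D (β (j + 1)) := by
    simp only [p, u, v, emb1_sub, emb1_zsmul, h1, Int.fract]; ring
  have hp2 : emb2 D p = u * emb2 D (β j) + v * emb2 D (β (j + 1)) := by
    simp only [p, u, v, emb2_sub, emb2_zsmul, h2, Int.fract]; ring
  have hu : 0 ≤ u := Int.fract_nonneg s
  have hv : 0 ≤ v := Int.fract_nonneg t
  have hu1 : u < 1 := Int.fract_lt_one s
  have hv1 : v < 1 := Int.fract_lt_one t
  by_contra hne
  have huv : 0 < u + v := by
    by_contra! h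
    exact hne ⟨by linarith, by linarith⟩
  rcases le_or_gt (u + v) 1 with huv1 | huv1
  · exact false_of_emb_eq_of_mem_triangle hβind hβsurj hβmono hβanti j p hu hv hu1 hv1 huv huv1
      hp1 hp2
  · refine false_of_emb_eq_of_mem_triangle hβind hβsurj hβmono hβanti j (β j + β (j + 1) - p)
      (u := 1 - u) (v := 1 - v) (by linarith) (by linarith) (by linarith) (by linarith)
      (by linarith) (by linarith) ?_ ?_
    · rw [emb1_sub, emb1_add, hp1]; ring
    · rw [emb2_sub, emb2_add, hp2]; ring

lemma div_mem_Ico_div_iff {a₁ a₂ b₁ b₂ x₁ x₂ : ℝ} (ha₂ : 0 < a₂) (hb₂ : 0 < b₂) (hx₂ : 0 < x₂)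
    (hab : a₁ * b₂ < b₁ * a₂) :
    x₁ / x₂ ∈ Set.Ico (a₁ / a₂) (b₁ / b₂) ↔
      ∃ s t : ℝ, 0 < s ∧ 0 ≤ t ∧ x₁ = s * a₁ + t * b₁ ∧ x₂ = s * a₂ + t * b₂ := by
  rw [Set.mem_Ico, div_le_div_iff₀ ha₂ hx₂, div_lt_div_iff₀ hx₂ hb₂]
  set Δ := b₁ * a₂ - a₁ * b₂ with hΔdef
  have hΔ : 0 < Δ := sub_pos.mpr hab
  constructor
  · rintro ⟨hlo, hhi⟩
    -- Cramer's rule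
    refine ⟨(b₁ * x₂ - x₁ * b₂) / Δ, (x₁ * a₂ - a₁ * x₂) / Δ,
      div_pos (by linarith) hΔ, div_nonneg (by linarith) hΔ.le, ?_, ?_⟩ <;>
    · field_simp
      rw [hΔdef]
      ring
  · rintro ⟨s, t, hs, ht, rfl, rfl⟩
    constructor <;> nlinarith [mul_pos hs hΔ, mul_nonneg ht hΔ.le]

theorem stmt9_general (D : ℕ)
    (hD2 : 2 ≤ D) (hsq : Squarefree D)
    (β : ℤ → ℤ × ℤ)
    (hβind : ∀ j : ℤ, Indec D (β j))
    (hβsurj : ∀ x : ℤ × ℤ, Indec D x → ∃ j : ℤ, β j = x)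
    (hβmono : StrictMono fun j : ℤ => emb1 D (β j))
    (x : ℤ × ℤ) (hx : TotPos D x) (j₀ : ℤ) :
    (∃ e f : ℤ, 1 ≤ e ∧ 0 ≤ f ∧ x = e • β j₀ + f • β (j₀ + 1)) ↔
      (emb1 D (β j₀) / emb2 D (β j₀) ≤ emb1 D x / emb2 D x ∧
       emb1 D x / emb2 D x < emb1 D (β (j₀ + 1)) / emb2 D (β (j₀ + 1))) := by
  have hβanti := strictAnti_emb2_of_strictMono_emb1 hD2 hsq hβind hβmono
  have hcross : emb1 D (β j₀) * emb2 D (β (j₀ + 1)) < emb1 D (β (j₀ + 1)) * emb2 D (β j₀) :=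
    mul_lt_mul'' (hβmono (lt_add_one j₀)) (hβanti (lt_add_one j₀)) (hβind j₀).1.1.le
      (hβind (j₀ + 1)).1.2.le
  rw [← Set.mem_Ico, div_mem_Ico_div_iff (hβind j₀).1.2 (hβind (j₀ + 1)).1.2 hx.2 hcross]
  constructor
  · rintro ⟨e, f, he, hf, rfl⟩
    exact ⟨e, f, by exact_mod_cast he, by exact_mod_cast hf,
      by rw [emb1_add, emb1_zsmul, emb1_zsmul], by rw [emb2_add, emb2_zsmul, emb2_zsmul]⟩
  · rintro ⟨s, t, hs, ht, h1, h2⟩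
    obtain ⟨hs', ht'⟩ := fract_eq_zero_of_emb_eq hβind hβsurj hβmono hβanti j₀ h1 h2
    rw [Int.fract, sub_eq_zero] at hs' ht'
    refine ⟨⌊s⌋, ⌊t⌋, ?_, Int.floor_nonneg.mpr ht,
      intPairEval_injective (irrational_omg hD2 hsq) ?_⟩
    · have : (0 : ℝ) < ⌊s⌋ := hs' ▸ hs
      exact_mod_cast this
    · change emb1 D x = emb1 D _
      rw [emb1_add, emb1_zsmul, emb1_zsmul, ← hs', ← ht', h1]

theorem stmt9 (D : ℕ)
    (hD2 : 2 ≤ D) (hsq : Squarefree D)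
    (β : ℤ → ℤ × ℤ)
    (hβind : ∀ j : ℤ, Indec D (β j))
    (hβsurj : ∀ x : ℤ × ℤ, Indec D x → ∃ j : ℤ, β j = x)
    (hβmono : StrictMono fun j : ℤ => emb1 D (β j))
    (hβ0 : β 0 = (1, 0))
    (x : ℤ × ℤ) (hx : TotPos D x) (j₀ : ℤ) :
    (∃ e f : ℤ, 1 ≤ e ∧ 0 ≤ f ∧ x = e • β j₀ + f • β (j₀ + 1)) ↔
      (emb1 D (β j₀) / emb2 D (β j₀) ≤ emb1 D x / emb2 D x ∧
       emb1 D x / emb2 D x < emb1 D (β (j₀ + 1)) / emb2 D (β (j₀ + 1))) :=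
  stmt9_general D hD2 hsq β hβind hβsurj hβmono x hx j₀
end

section
/- Let α = e α_{i,0} + f α_{i,1} ∈ O_K^+ with i odd, e ≥ 1, f ≥ 1 (i.e., r = 0). Then N(α) > e f √Δ. -/
open Real Filter

/-- first real embedding of α_i = p_i - q_i ω_D' -/
noncomputable def ar (D : ℕ) (p q : ℤ → ℤ) (i : ℤ) : ℝ := (p i : ℝ) - (q i : ℝ) * omgc D

/-- second real embedding (Galois conjugate) of α_i -/
noncomputable def ac (D : ℕ) (p q : ℤ → ℤ) (i : ℤ) : ℝ := (p i : ℝ) - (q i : ℝ) * omg D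

/-- first embedding of the semiconvergent α_{i,r} = α_i + r α_{i+1} -/
noncomputable def ar2 (D : ℕ) (p q : ℤ → ℤ) (i r : ℤ) : ℝ := ar D p q i + (r : ℝ) * ar D p q (i + 1)

/-- conjugate embedding of the semiconvergent α_{i,r} -/
noncomputable def ac2 (D : ℕ) (p q : ℤ → ℤ) (i r : ℤ) : ℝ := ac D p q i + (r : ℝ) * ac D p q (i + 1)

/-- N_i = |N(α_i)| -/
noncomputable def Ni (D : ℕ) (p q : ℤ → ℤ) (i : ℤ) : ℝ := |ar D p q i * ac D p q i|


/-!
Write `A, B` for the first embeddings of `α_i, α_{i+1}` and `A', B'` for their conjugates.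
Since `α_k' = -α_{k-1}' · {γ_k}` with `0 < {γ_k} < 1`, the conjugates alternate in sign and
shrink, so for odd `i` we get `A, B, A' > 0` and `A' + B' = A' (1 - {γ_{i+1}}) > 0`; the determinant
identity `p_{i+1} q_i - p_i q_{i+1} = -1` turns into `A' B - A B' = √Δ`. Expanding,
`N(e α_i + f (α_i + α_{i+1})) = e f (A' B - A B') + e² A A' + 2 e f A (A' + B') + f² (A + B)(A' + B')`,
and the last three terms are positive.
-/

theorem irrational_sqrt_of_squarefree {D : ℕ} (hD : 2 ≤ D) (hsq : Squarefree D) :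
    Irrational √D := by
  rw [irrational_sqrt_natCast_iff]
  rintro ⟨r, rfl⟩
  have hr : r = 1 := Nat.isUnit_iff.mp (hsq r dvd_rfl)
  subst hr
  omega

theorem irrational_omg_s17 {D : ℕ} (h : Irrational √D) : Irrational (omg D) := by
  unfold omg
  split_ifs
  · rw [show (1 + √D) / 2 = ((1 / 2 : ℚ) : ℝ) + ((1 / 2 : ℚ) : ℝ) * √D by
      push_cast; ring]
    exact (h.ratCast_mul (by norm_num)).ratCast_add _
  · exact h

theorem omgc_neg {D : ℕ} (hD : 2 ≤ D) : omgc D < 0 := by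
  have h1 : 1 < √(D : ℝ) := by
    rw [Real.lt_sqrt zero_le_one]
    exact_mod_cast (by omega : 1 < D)
  unfold omgc
  split_ifs <;> linarith

theorem omg_sub_omgc (D : ℕ) : omg D - omgc D = √(disc D) := by
  unfold omg omgc disc
  split_ifs
  · ring
  · rw [show (4 : ℝ) * D = 2 ^ 2 * D by norm_num, Real.sqrt_mul (by norm_num),
      Real.sqrt_sq (by norm_num)]
    ring

theorem gam_succ (D n : ℕ) : gam D (n + 1) = (Int.fract (gam D n))⁻¹ := by
  rw [gam, one_div, Int.self_sub_floor]

theorem irrational_gam {D : ℕ} (h : Irrational (omg D)) (n : ℕ) : Irrational (gam D n) := by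
  induction n with
  | zero => exact h.add_intCast _
  | succ n ih => rw [gam_succ, ← Int.self_sub_floor]; exact (ih.sub_intCast _).inv

theorem fract_gam_pos {D : ℕ} (h : Irrational (omg D)) (n : ℕ) : 0 < Int.fract (gam D n) :=
  Int.fract_pos.mpr ((irrational_gam h n).ne_int _)

theorem one_le_uD_succ {D : ℕ} (h : Irrational (omg D)) (n : ℕ) : 1 ≤ uD D (n + 1) := by
  rw [uD, Int.le_floor, gam_succ, Int.cast_one]
  exact (one_le_inv₀ (fract_gam_pos h n)).mpr (Int.fract_lt_one _).le

theorem uD_zero (D : ℕ) : uD D 0 = 2 * ⌊-omgc D⌋ + if D % 4 = 1 then 1 else 0 := by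
  rw [uD, gam, sigmaD, Int.floor_add_intCast]
  unfold omg omgc
  split_ifs
  · rw [show (1 + √D) / 2 = -((1 - √D) / 2) + (1 : ℤ) by push_cast; ring,
      Int.floor_add_intCast]
    ring
  · rw [neg_neg]; ring

theorem ceil_uD_zero_div_two (D : ℕ) : ⌈(uD D 0 : ℚ) / 2⌉ = uD D 0 - ⌊-omgc D⌋ := by
  rw [uD_zero]
  split_ifs
  · rw [show ((2 * ⌊-omgc D⌋ + 1 : ℤ) : ℚ) / 2 = (1 / 2 : ℚ) + (⌊-omgc D⌋ : ℤ) by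
        push_cast; ring,
      Int.ceil_add_intCast, show ⌈(1 / 2 : ℚ)⌉ = 1 by rw [Int.ceil_eq_iff]; norm_num]
    ring
  · rw [show ((2 * ⌊-omgc D⌋ + 0 : ℤ) : ℚ) / 2 = (⌊-omgc D⌋ : ℤ) by push_cast; ring,
      Int.ceil_intCast]
    ring

structure IsConvergents (D : ℕ) (p q : ℤ → ℤ) : Prop where
  p_neg_one : p (-1) = 1
  q_neg_one : q (-1) = 0
  p_zero : p 0 = ⌈(uD D 0 : ℚ) / 2⌉
  q_zero : q 0 = 1
  p_rec : ∀ i : ℤ, -1 ≤ i → p (i + 2) = uD D (i + 2).toNat * p (i + 1) + p i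
  q_rec : ∀ i : ℤ, -1 ≤ i → q (i + 2) = uD D (i + 2).toNat * q (i + 1) + q i

namespace IsConvergents

variable {D : ℕ} {p q : ℤ → ℤ}

theorem p_succ (h : IsConvergents D p q) (k : ℕ) :
    p (k + 1) = uD D (k + 1) * p k + p (k - 1) := by
  have := h.p_rec (k - 1) (by omega)
  rwa [sub_add_cancel, show (k : ℤ) - 1 + 2 = k + 1 by ring,
    show ((k : ℤ) + 1).toNat = k + 1 by omega] at this

theorem q_succ (h : IsConvergents D p q) (k : ℕ) :
    q (k + 1) = uD D (k + 1) * q k + q (k - 1) := by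
  have := h.q_rec (k - 1) (by omega)
  rwa [sub_add_cancel, show (k : ℤ) - 1 + 2 = k + 1 by ring,
    show ((k : ℤ) + 1).toNat = k + 1 by omega] at this

theorem sub_mul_succ (h : IsConvergents D p q) (ω : ℝ) (k : ℕ) :
    (p (k + 1) : ℝ) - q (k + 1) * ω =
      uD D (k + 1) * ((p k : ℝ) - q k * ω) + ((p (k - 1) : ℝ) - q (k - 1) * ω) := by
  rw [h.p_succ, h.q_succ]
  push_cast
  ring

theorem det (h : IsConvergents D p q) (k : ℕ) :
    p k * q (k - 1) - p (k - 1) * q k = (-1) ^ (k + 1) := by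
  induction k with
  | zero => simp [h.p_neg_one, h.q_neg_one, h.q_zero]
  | succ k ih =>
    rw [Nat.cast_succ, add_sub_cancel_right, h.p_succ, h.q_succ, pow_succ]
    linear_combination -ih

theorem ac_mul_ar_sub_ar_mul_ac (h : IsConvergents D p q) (k : ℕ) :
    ac D p q (k - 1) * ar D p q k - ar D p q (k - 1) * ac D p q k = (-1) ^ k * √(disc D) := by
  have hdet := congrArg (Int.cast : ℤ → ℝ) (h.det k)
  push_cast at hdet
  rw [← omg_sub_omgc]
  unfold ar ac
  linear_combination (omgc D - omg D) * hdet

theorem ar_zero_pos (h : IsConvergents D p q) (hD : 2 ≤ D) : 0 < ar D p q 0 := by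
  have hfloor : (0 : ℝ) ≤ ⌊-omgc D⌋ := by
    exact_mod_cast Int.floor_nonneg.mpr (neg_nonneg.mpr (omgc_neg hD).le)
  have hω' := omgc_neg hD
  rw [ar, h.p_zero, h.q_zero, ceil_uD_zero_div_two, uD_zero]
  split_ifs <;> push_cast <;> linarith

theorem ar_pos (h : IsConvergents D p q) (hD : 2 ≤ D) (hω : Irrational (omg D)) (k : ℕ) :
    0 < ar D p q (k - 1) ∧ 0 < ar D p q k := by
  induction k with
  | zero => exact ⟨by simp [ar, h.p_neg_one, h.q_neg_one], h.ar_zero_pos hD⟩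
  | succ k ih =>
    have hu : (1 : ℝ) ≤ uD D (k + 1) := by exact_mod_cast one_le_uD_succ hω k
    rw [Nat.cast_succ, add_sub_cancel_right]
    refine ⟨ih.2, ?_⟩
    rw [ar, h.sub_mul_succ, ← ar, ← ar]
    exact add_pos (mul_pos (by linarith) ih.2) ih.1

theorem ac_eq_neg_mul_fract (h : IsConvergents D p q) (hω : Irrational (omg D)) (k : ℕ) :
    ac D p q k = -ac D p q (k - 1) * Int.fract (gam D k) := by
  induction k with
  | zero =>
    rw [Nat.cast_zero, zero_sub, ← Int.self_sub_floor, ac, ac, h.p_neg_one, h.q_neg_one, h.q_zero,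
      h.p_zero, ceil_uD_zero_div_two, uD, gam, sigmaD]
    push_cast
    ring
  | succ k ih =>
    have hfract := (fract_gam_pos hω k).ne'
    have hprev : ac D p q (k - 1) = -ac D p q k * gam D (k + 1) := by
      rw [gam_succ, ih]
      field_simp
    rw [Nat.cast_succ, add_sub_cancel_right, ac, h.sub_mul_succ, ← ac, ← ac, hprev, uD,
      ← Int.self_sub_floor (gam D (k + 1))]
    ring

theorem neg_one_pow_mul_ac_pos (h : IsConvergents D p q) (hω : Irrational (omg D)) (k : ℕ) :
    0 < (-1) ^ k * ac D p q (k - 1) := by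
  induction k with
  | zero => simp [ac, h.p_neg_one, h.q_neg_one]
  | succ k ih =>
    rw [Nat.cast_succ, add_sub_cancel_right, h.ac_eq_neg_mul_fract hω, pow_succ]
    have := mul_pos ih (fract_gam_pos hω k)
    linarith

theorem neg_one_pow_mul_ac_add_ac_pos (h : IsConvergents D p q) (hω : Irrational (omg D))
    (k : ℕ) : 0 < (-1) ^ k * (ac D p q (k - 1) + ac D p q k) := by
  rw [h.ac_eq_neg_mul_fract hω k, show ∀ a b : ℝ, a + -a * b = a * (1 - b) by intros; ring,
    ← mul_assoc]
  exact mul_pos (h.neg_one_pow_mul_ac_pos hω k) (sub_pos.mpr (Int.fract_lt_one _))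

end IsConvergents

theorem mul_cross_sub_lt {A B A' B' e f : ℝ} (hA : 0 < A) (hAB : 0 < A + B) (hA' : 0 < A')
    (hAB' : 0 < A' + B') (he : 0 < e) (hf : 0 < f) :
    e * f * (A' * B - A * B') < (e * A + f * (A + B)) * (e * A' + f * (A' + B')) := by
  have : 0 < e ^ 2 * (A * A') + 2 * e * f * (A * (A' + B')) + f ^ 2 * ((A + B) * (A' + B')) := by
    positivity
  rw [← sub_pos]
  convert this using 1
  ring

theorem stmt17_general (D : ℕ)
    (hD2 : 2 ≤ D) (hsq : Squarefree D)
    (p q : ℤ → ℤ)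
    (hpm1 : p (-1) = 1) (hqm1 : q (-1) = 0)
    (hp0 : p 0 = ⌈(uD D 0 : ℚ) / 2⌉) (hq0 : q 0 = 1)
    (hprec : ∀ i : ℤ, -1 ≤ i → p (i + 2) = uD D (i + 2).toNat * p (i + 1) + p i)
    (hqrec : ∀ i : ℤ, -1 ≤ i → q (i + 2) = uD D (i + 2).toNat * q (i + 1) + q i)
    (i e f : ℤ) (hi : -1 ≤ i) (hodd : Odd i)
    (he : 1 ≤ e) (hf : 1 ≤ f) :
    (e : ℝ) * (f : ℝ) * Real.sqrt (disc D) <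
      ((e : ℝ) * ar2 D p q i 0 + (f : ℝ) * ar2 D p q i 1) *
        ((e : ℝ) * ac2 D p q i 0 + (f : ℝ) * ac2 D p q i 1) := by
  have hω : Irrational (omg D) := irrational_omg_s17 (irrational_sqrt_of_squarefree hD2 hsq)
  have hpq : IsConvergents D p q := ⟨hpm1, hqm1, hp0, hq0, hprec, hqrec⟩
  obtain ⟨t, rfl⟩ : ∃ t : ℕ, i = (2 * t : ℕ) - 1 := by
    obtain ⟨j, rfl⟩ := hodd
    exact ⟨(j + 1).toNat, by omega⟩
  have hsign : (-1 : ℝ) ^ (2 * t) = 1 := by rw [pow_mul, neg_one_sq, one_pow]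
  obtain ⟨hA, hB⟩ := hpq.ar_pos hD2 hω (2 * t)
  have hA' := hpq.neg_one_pow_mul_ac_pos hω (2 * t)
  have hAB' := hpq.neg_one_pow_mul_ac_add_ac_pos hω (2 * t)
  have hcross := hpq.ac_mul_ar_sub_ar_mul_ac (2 * t)
  rw [hsign, one_mul] at hA' hAB' hcross
  simp only [ar2, ac2, sub_add_cancel, Int.cast_zero, Int.cast_one, zero_mul, add_zero, one_mul]
  rw [← hcross]
  exact mul_cross_sub_lt hA (add_pos hA hB) hA' hAB' (by exact_mod_cast he) (by exact_mod_cast hf)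

theorem stmt17 (D : ℕ)
    (hD2 : 2 ≤ D) (hsq : Squarefree D)
    (p q : ℤ → ℤ)
    (hpm1 : p (-1) = 1) (hqm1 : q (-1) = 0)
    (hp0 : p 0 = ⌈(uD D 0 : ℚ) / 2⌉) (hq0 : q 0 = 1)
    (hprec : ∀ i : ℤ, -1 ≤ i → p (i + 2) = uD D (i + 2).toNat * p (i + 1) + p i)
    (hqrec : ∀ i : ℤ, -1 ≤ i → q (i + 2) = uD D (i + 2).toNat * q (i + 1) + q i)
    (i e f : ℤ) (hi : -1 ≤ i) (hodd : Odd i)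
    (he : 1 ≤ e) (hf : 1 ≤ f)
    (hα : 0 < (e : ℝ) * ar2 D p q i 0 + (f : ℝ) * ar2 D p q i 1 ∧
           0 < (e : ℝ) * ac2 D p q i 0 + (f : ℝ) * ac2 D p q i 1) :
    (e : ℝ) * (f : ℝ) * Real.sqrt (disc D) <
      ((e : ℝ) * ar2 D p q i 0 + (f : ℝ) * ar2 D p q i 1) *
        ((e : ℝ) * ac2 D p q i 0 + (f : ℝ) * ac2 D p q i 1) :=
  stmt17_general D hD2 hsq p q hpm1 hqm1 hp0 hq0 hprec hqrec i e f hi hodd he hf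
end
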